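/- Let G be a finite simple graph on n vertices, let Ḡ be its complement, and let k be an integer with 1 ≤ k ≤ n−1. Then the Laplacian matrices L = L(F_k(G)) and L̄ = L(F_k(Ḡ)) of the k-token graphs of G and of Ḡ commute: L L̄ = L̄ L. -/

import Mathlib

open Finset Matrix
open scoped symmDiff

/-- The `k`-token graph of a graph `G`: vertices are the `k`-subsets of the vertex set,
two subsets `A`, `B` being adjacent iff their symmetric difference is a pair `{a, b}`
with `a ∈ A`, `b ∈ B` and `a` adjacent to `b` in `G`. -/
def tokenGraph {V : Type*} [DecidableEq V] (G : SimpleGraph V) (k : ℕ) :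
    SimpleGraph {s : Finset V // s.card = k} where
  Adj A B := ∃ a b, a ∈ A.1 ∧ b ∈ B.1 ∧ G.Adj a b ∧ A.1 ∆ B.1 = {a, b}
  symm := by
    constructor
    rintro A B ⟨a, b, ha, hb, hab, hd⟩
    exact ⟨b, a, hb, ha, hab.symm, by rw [symmDiff_comm, hd, Finset.pair_comm]⟩
  loopless := by
    constructor
    rintro A ⟨a, b, ha, hb, hab, hd⟩
    rw [symmDiff_self] at hd
    exact Finset.insert_ne_empty a {b} hd.symm

/-- The Laplacian matrix (over `ℝ`) of a finite simple graph: `L = D - A`. -/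
noncomputable def Lap {V : Type*} [Fintype V] [DecidableEq V] (G : SimpleGraph V) :
    Matrix V V ℝ :=
  letI := Classical.decRel G.Adj
  G.lapMatrix ℝ

/-!
Write `L(F_k(G)) = ∑_{e ∈ E(G)} (1 - P_e)`, where `P_e` is the permutation matrix through which
the transposition of the endpoints of `e` acts on `k`-subsets: for `A ≠ B` exactly one edge `e`
carries `A` to `B` if `A` and `B` are adjacent in `F_k(G)`, and none otherwise, and both sides
have zero row sums. Every transposition is an automorphism of `F_k(Kₙ)`, so each `P_e`, hence
`L(F_k(G))`, commutes with `L(F_k(Kₙ)) = L(F_k(G)) + L(F_k(Ḡ))`.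
-/

namespace Finset

variable {α : Type*} [DecidableEq α] {s t : Finset α} {a b : α}

lemma mem_map_swap {x : α} :
    x ∈ s.map (Equiv.swap a b).toEmbedding ↔ Equiv.swap a b x ∈ s := by
  rw [mem_map_equiv, Equiv.symm_swap]

lemma map_swap_eq_self (h : a ∈ s ↔ b ∈ s) : s.map (Equiv.swap a b).toEmbedding = s := by
  ext x
  rw [mem_map_swap]
  rcases eq_or_ne x a with rfl | hxa
  · rw [Equiv.swap_apply_left]; exact h.symm
  rcases eq_or_ne x b with rfl | hxb
  · rw [Equiv.swap_apply_right]; exact h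
  · rw [Equiv.swap_apply_of_ne_of_ne hxa hxb]

lemma symmDiff_map_swap (ha : a ∈ s) (hb : b ∉ s) :
    s ∆ s.map (Equiv.swap a b).toEmbedding = {a, b} := by
  ext x
  rw [mem_symmDiff, mem_map_swap, mem_insert, mem_singleton]
  rcases eq_or_ne x a with rfl | hxa
  · simp [ha, hb]
  rcases eq_or_ne x b with rfl | hxb
  · simp [ha, hb]
  · simp [Equiv.swap_apply_of_ne_of_ne hxa hxb, hxa, hxb]

lemma map_swap_eq_of_symmDiff_eq_pair (ha : a ∈ s) (hb : b ∈ t) (h : s ∆ t = {a, b}) :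
    s.map (Equiv.swap a b).toEmbedding = t := by
  have hmem : ∀ x, x ∈ s ∆ t ↔ x = a ∨ x = b := by simp [h]
  have ha' := (hmem a).2 (Or.inl rfl)
  have hb' := (hmem b).2 (Or.inr rfl)
  rw [mem_symmDiff] at ha' hb'
  ext x
  rw [mem_map_swap]
  rcases eq_or_ne x a with rfl | hxa
  · rw [Equiv.swap_apply_left]; tauto
  rcases eq_or_ne x b with rfl | hxb
  · rw [Equiv.swap_apply_right]; tauto
  · have hx := (hmem x).not.2 (by tauto)
    rw [mem_symmDiff] at hx
    rw [Equiv.swap_apply_of_ne_of_ne hxa hxb]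
    tauto

lemma map_symmDiff {β : Type*} [DecidableEq β] (f : α ↪ β) (s t : Finset α) :
    (s ∆ t).map f = s.map f ∆ t.map f := by
  simp only [map_eq_image, image_symmDiff _ _ f.injective]

end Finset

namespace Matrix

variable {n R : Type*} [Fintype n] [DecidableEq n]

lemma commute_permMatrix_of_submatrix_eq [NonAssocSemiring R] {σ : Equiv.Perm n}
    {M : Matrix n n R} (h : M.submatrix σ σ = M) : Commute (σ.permMatrix R) M := by
  change σ.toPEquiv.toMatrix * M = M * σ.toPEquiv.toMatrix
  rw [PEquiv.toMatrix_toPEquiv_mul, PEquiv.mul_toMatrix_toPEquiv]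
  ext i j
  simpa using congrFun (congrFun h i) (σ.symm j)

lemma eq_of_offDiag_eq_of_mulVec_one_eq [Ring R] {M N : Matrix n n R}
    (hoff : ∀ i j, i ≠ j → M i j = N i j)
    (hrow : M *ᵥ (fun _ ↦ 1) = N *ᵥ (fun _ ↦ 1)) : M = N := by
  ext i j
  rcases eq_or_ne i j with rfl | hij
  · have hi := congrFun hrow i
    simp only [mulVec, dotProduct, mul_one] at hi
    rw [← add_sum_erase _ _ (mem_univ i), ← add_sum_erase _ _ (mem_univ i),
      sum_congr rfl fun j hj => hoff i j (ne_of_mem_erase hj).symm] at hi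
    exact add_right_cancel hi
  · exact hoff i j hij

end Matrix

variable {V W : Type*}

lemma Lap_eq_lapMatrix [Fintype V] [DecidableEq V] (G : SimpleGraph V) [DecidableRel G.Adj] :
    Lap G = G.lapMatrix ℝ := by
  unfold Lap
  congr!

namespace SimpleGraph.Iso

variable [Fintype V] [DecidableEq V] [Fintype W] [DecidableEq W] {G : SimpleGraph V}
  {H : SimpleGraph W}

lemma submatrix_lapMatrix (R : Type*) [AddGroupWithOne R] [DecidableRel G.Adj]
    [DecidableRel H.Adj] (φ : G ≃g H) : (H.lapMatrix R).submatrix φ φ = G.lapMatrix R := by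
  ext i j
  simp [lapMatrix, degMatrix, diagonal_apply, adjMatrix_apply, φ.injective.eq_iff,
    φ.map_adj_iff]

lemma commute_permMatrix_lap (φ : G ≃g G) :
    Commute (Equiv.Perm.permMatrix ℝ φ.toEquiv) (Lap G) := by
  let := Classical.decRel G.Adj
  exact commute_permMatrix_of_submatrix_eq (φ.submatrix_lapMatrix ℝ)

end SimpleGraph.Iso

def tokenEquiv (e : V ≃ W) (k : ℕ) :
    {s : Finset V // s.card = k} ≃ {s : Finset W // s.card = k} :=
  e.finsetCongr.subtypeEquiv fun s => by rw [Equiv.finsetCongr_apply, card_map]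

@[simp]
lemma coe_tokenEquiv_apply (e : V ≃ W) {k : ℕ} (A : {s : Finset V // s.card = k}) :
    (tokenEquiv e k A : Finset W) = A.1.map e.toEmbedding :=
  rfl

def SimpleGraph.Iso.tokenGraph [DecidableEq V] [DecidableEq W] {G : SimpleGraph V}
    {H : SimpleGraph W} (φ : G ≃g H) (k : ℕ) : tokenGraph G k ≃g tokenGraph H k where
  toEquiv := tokenEquiv φ.toEquiv k
  map_rel_iff' {A B} := by
    change (∃ a b, _) ↔ ∃ a b, _
    simp only [coe_tokenEquiv_apply, ← Finset.map_symmDiff]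
    constructor
    · rintro ⟨_, _, ha', hb', hab, hd⟩
      obtain ⟨a, ha, rfl⟩ := mem_map.1 ha'
      obtain ⟨b, hb, rfl⟩ := mem_map.1 hb'
      refine ⟨a, b, ha, hb, φ.map_adj_iff.1 hab,
        Finset.map_injective φ.toEquiv.toEmbedding ?_⟩
      simpa [map_insert] using hd
    · rintro ⟨a, b, ha, hb, hab, hd⟩
      exact ⟨φ a, φ b, mem_map_of_mem _ ha, mem_map_of_mem _ hb, φ.map_adj_iff.2 hab,
        by simp [hd, map_insert]⟩

section TokenSwap

variable [DecidableEq V] {k : ℕ} {G : SimpleGraph V} {A B : {s : Finset V // s.card = k}}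

def tokenSwap (k : ℕ) : Sym2 V → Equiv.Perm {s : Finset V // s.card = k} :=
  Sym2.lift ⟨fun a b => tokenEquiv (Equiv.swap a b) k,
    fun a b => by simp only [Equiv.swap_comm]⟩

@[simp]
lemma tokenSwap_mk (a b : V) : tokenSwap k s(a, b) = tokenEquiv (Equiv.swap a b) k :=
  rfl

lemma mem_xor_of_tokenSwap_ne {a b : V} (h : tokenSwap k s(a, b) A ≠ A) :
    (a ∈ A.1 ∧ b ∉ A.1) ∨ (b ∈ A.1 ∧ a ∉ A.1) := by
  by_contra! hab
  exact h (Subtype.ext (map_swap_eq_self (by tauto)))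

lemma symmDiff_tokenSwap {e : Sym2 V} (h : tokenSwap k e A ≠ A) :
    A.1 ∆ (tokenSwap k e A).1 = e.toFinset := by
  induction e using Sym2.ind with
  | _ a b =>
    rw [Sym2.toFinset_mk_eq, tokenSwap_mk, coe_tokenEquiv_apply]
    rcases mem_xor_of_tokenSwap_ne h with ⟨ha, hb⟩ | ⟨hb, ha⟩
    · exact symmDiff_map_swap ha hb
    · rw [Equiv.swap_comm, pair_comm]
      exact symmDiff_map_swap hb ha

lemma eq_of_tokenSwap_eq {e f : Sym2 V} (he : tokenSwap k e A ≠ A)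
    (h : tokenSwap k e A = tokenSwap k f A) : e = f := by
  have hf : tokenSwap k f A ≠ A := h ▸ he
  have hfin : e.toFinset = f.toFinset := by
    rw [← symmDiff_tokenSwap he, ← symmDiff_tokenSwap hf, h]
  exact Sym2.ext fun x => by rw [← Sym2.mem_toFinset, hfin, Sym2.mem_toFinset]

lemma tokenGraph_adj_of_tokenSwap_eq {a b : V} (hab : G.Adj a b) (hne : A ≠ B)
    (h : tokenSwap k s(a, b) A = B) : (tokenGraph G k).Adj A B := by
  have hmoved : tokenSwap k s(a, b) A ≠ A := h ▸ hne.symm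
  have hd := symmDiff_tokenSwap hmoved
  rw [h, Sym2.toFinset_mk_eq] at hd
  rcases mem_xor_of_tokenSwap_ne hmoved with ⟨ha, hb⟩ | ⟨hb, ha⟩
  · refine ⟨a, b, ha, ?_, hab, hd⟩
    rw [← h, tokenSwap_mk, coe_tokenEquiv_apply, mem_map_swap, Equiv.swap_apply_right]
    exact ha
  · refine ⟨b, a, hb, ?_, hab.symm, hd.trans (pair_comm a b)⟩
    rw [← h, tokenSwap_mk, coe_tokenEquiv_apply, mem_map_swap, Equiv.swap_apply_left]
    exact hb

lemma exists_tokenSwap_eq_of_adj (h : (tokenGraph G k).Adj A B) :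
    ∃ e ∈ G.edgeSet, tokenSwap k e A = B := by
  obtain ⟨a, b, ha, hb, hab, hd⟩ := h
  exact ⟨s(a, b), hab, Subtype.ext (map_swap_eq_of_symmDiff_eq_pair ha hb hd)⟩

end TokenSwap

section Laplacian

variable [DecidableEq V] {k : ℕ}

lemma sum_permMatrix_tokenSwap_apply_of_ne (G : SimpleGraph V) [Fintype G.edgeSet]
    [DecidableRel (tokenGraph G k).Adj] {A B : {s : Finset V // s.card = k}} (hne : A ≠ B) :
    (∑ e ∈ G.edgeFinset, (tokenSwap k e).permMatrix ℝ) A B =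
      (tokenGraph G k).adjMatrix ℝ A B := by
  rw [Matrix.sum_apply, SimpleGraph.adjMatrix_apply]
  simp only [PEquiv.toMatrix_apply, Equiv.toPEquiv_apply, Option.mem_def, Option.some.injEq]
  split_ifs with hadj
  · obtain ⟨e, he, hAB⟩ := exists_tokenSwap_eq_of_adj hadj
    have hmoved : tokenSwap k e A ≠ A := hAB ▸ hne.symm
    rw [sum_eq_single_of_mem e (G.mem_edgeFinset.2 he) fun f _ hfe =>
      if_neg fun hf => hfe (eq_of_tokenSwap_eq hmoved (hAB.trans hf.symm)).symm, if_pos hAB]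
  · refine sum_eq_zero fun e he => if_neg fun h => hadj ?_
    induction e using Sym2.ind with
    | _ a b => exact tokenGraph_adj_of_tokenSwap_eq (G.mem_edgeFinset.1 he) hne h

variable [Fintype V]

lemma lap_tokenGraph_eq_sum (G : SimpleGraph V) [Fintype G.edgeSet] :
    Lap (tokenGraph G k) = ∑ e ∈ G.edgeFinset, (1 - (tokenSwap k e).permMatrix ℝ) := by
  classical
  rw [Lap_eq_lapMatrix]
  refine Matrix.eq_of_offDiag_eq_of_mulVec_one_eq (fun A B hAB => ?_) ?_
  · rw [sum_sub_distrib, sum_const, SimpleGraph.lapMatrix, Matrix.sub_apply, Matrix.sub_apply,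
      Matrix.smul_apply, SimpleGraph.degMatrix, diagonal_apply_ne _ hAB, one_apply_ne hAB,
      smul_zero, sum_permMatrix_tokenSwap_apply_of_ne G hAB]
  · rw [SimpleGraph.lapMatrix_mulVec_const_eq_zero, sum_mulVec]
    simp only [sub_mulVec, one_mulVec, permMatrix_mulVec, Function.comp_def, sub_self,
      sum_const_zero]

lemma lap_tokenGraph_sup {G H : SimpleGraph V} (hGH : Disjoint G H) :
    Lap (tokenGraph (G ⊔ H) k) = Lap (tokenGraph G k) + Lap (tokenGraph H k) := by
  classical
  rw [lap_tokenGraph_eq_sum, lap_tokenGraph_eq_sum, lap_tokenGraph_eq_sum,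
    SimpleGraph.edgeFinset_sup, sum_union (SimpleGraph.disjoint_edgeFinset.2 hGH)]

lemma commute_permMatrix_tokenSwap_lap_top (e : Sym2 V) :
    Commute ((tokenSwap k e).permMatrix ℝ) (Lap (tokenGraph ⊤ k)) := by
  induction e using Sym2.ind with
  | _ a b =>
    exact ((SimpleGraph.Iso.completeGraph (Equiv.swap a b)).tokenGraph k).commute_permMatrix_lap

lemma commute_lap_tokenGraph_lap_top (G : SimpleGraph V) :
    Commute (Lap (tokenGraph G k)) (Lap (tokenGraph ⊤ k)) := by
  classical
  rw [lap_tokenGraph_eq_sum G]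
  exact Commute.sum_left _ _ _ fun e _ =>
    (Commute.one_left _).sub_left (commute_permMatrix_tokenSwap_lap_top e)

end Laplacian

theorem lap_token_compl_commute_general (n k : ℕ) (G : SimpleGraph (Fin n)) :
    Lap (tokenGraph G k) * Lap (tokenGraph Gᶜ k) =
      Lap (tokenGraph Gᶜ k) * Lap (tokenGraph G k) := by
  have hsum : Lap (tokenGraph G k) + Lap (tokenGraph Gᶜ k) = Lap (tokenGraph ⊤ k) := by
    rw [← lap_tokenGraph_sup disjoint_compl_right, sup_compl_eq_top]
  rw [eq_sub_of_add_eq' hsum]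
  exact (commute_lap_tokenGraph_lap_top G).sub_right (Commute.refl _)

/-- The Laplacian matrices of the `k`-token graphs of a graph `G` and of
its complement `Ḡ` commute: `L L̄ = L̄ L`. -/
theorem lap_token_compl_commute (n k : ℕ) (hk1 : 1 ≤ k) (hk2 : k ≤ n - 1)
    (G : SimpleGraph (Fin n)) :
    Lap (tokenGraph G k) * Lap (tokenGraph Gᶜ k) =
      Lap (tokenGraph Gᶜ k) * Lap (tokenGraph G k) :=
  lap_token_compl_commute_general n k G
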